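/- If M is a closed subspace of E and N is a finite-dimensional subspace of E, then M + N is a closed subspace of E. In particular, every finite-dimensional subspace of E is closed. -/

import Mathlib

/-- A (nondegenerate) Hermitian space: a division ring `K` with an involution,
a left `K`-vector space `E`, and a Hermitian form on `E`. -/
structure HermitianSpace (K E : Type*) [DivisionRing K] [AddCommGroup E] [Module K E] where
  star : K → K
  star_add : ∀ a b : K, star (a + b) = star a + star b
  star_mul : ∀ a b : K, star (a * b) = star b * star a
  star_star : ∀ a : K, star (star a) = a
  form : E → E → K
  form_add_left : ∀ x y z : E, form (x + y) z = form x z + form y z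
  form_add_right : ∀ x y z : E, form x (y + z) = form x y + form x z
  form_smul_left : ∀ (ρ : K) (x y : E), form (ρ • x) y = ρ * form x y
  form_smul_right : ∀ (ρ : K) (x y : E), form x (ρ • y) = form x y * star ρ
  nondeg : ∀ a : E, (∀ x : E, form a x = 0) → a = 0
  hermitian : ∀ x y : E, star (form x y) = form y x

namespace HermitianSpace

variable {K E : Type*} [DivisionRing K] [AddCommGroup E] [Module K E]

/-- The orthogonal companion `M^⊥` of a subspace `M`. -/
def perp (h : HermitianSpace K E) (M : Submodule K E) : Submodule K E where
  carrier := {x : E | ∀ m ∈ M, h.form x m = 0}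
  add_mem' := fun {a b} ha hb => by
    intro m hm
    rw [h.form_add_left, ha m hm, hb m hm, add_zero]
  zero_mem' := by
    intro m hm
    have h0 : h.form ((0 : K) • (0 : E)) m = 0 * h.form 0 m := h.form_smul_left 0 0 m
    simpa using h0
  smul_mem' := fun c a ha => by
    intro m hm
    rw [h.form_smul_left, ha m hm, mul_zero]

/-- The form is orthomodular when `M + M^⊥ = E` for every closed subspace `M`. -/
def Orthomodular (h : HermitianSpace K E) : Prop :=
  ∀ M : Submodule K E, h.perp (h.perp M) = M → M ⊔ h.perp M = ⊤

/-- The form is anisotropic when `⟨x, x⟩ ≠ 0` for every nonzero `x`. -/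
def Anisotropic (h : HermitianSpace K E) : Prop :=
  ∀ x : E, x ≠ 0 → h.form x x ≠ 0

end HermitianSpace

/-!
Adjoining one vector `x ∉ M` to a closed subspace `M` keeps it closed: pick `z ∈ M^⊥` with
`⟨z, x⟩ ≠ 0`; then `M^⊥ = (M + Kx)^⊥ + Kz`, so for `y ∈ (M + Kx)^⊥⊥` the vector `y - ρx` that is
orthogonal to `z` lies in `M^⊥⊥ = M`. Induction on a finite spanning set gives the theorem, and
the special case `M = 0` closes every finite-dimensional subspace.
-/

namespace HermitianSpace

variable {K E : Type*} [DivisionRing K] [AddCommGroup E] [Module K E] (h : HermitianSpace K E)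

theorem star_zero : h.star 0 = 0 :=
  (AddMonoidHom.mk' h.star h.star_add).map_zero

theorem form_zero_right (x : E) : h.form x 0 = 0 :=
  (AddMonoidHom.mk' (h.form x) (h.form_add_right x)).map_zero

theorem form_sub_left (x y z : E) : h.form (x - y) z = h.form x z - h.form y z :=
  (AddMonoidHom.mk' (h.form · z) (fun a b => h.form_add_left a b z)).map_sub x y

theorem form_eq_zero_comm {x y : E} (hxy : h.form x y = 0) : h.form y x = 0 := by
  rw [← h.hermitian, hxy, h.star_zero]

theorem perp_antitone {M N : Submodule K E} (hMN : M ≤ N) : h.perp N ≤ h.perp M :=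
  fun _ hv m hm => hv m (hMN hm)

theorem le_perp_perp (M : Submodule K E) : M ≤ h.perp (h.perp M) :=
  fun _ hm _ hv => h.form_eq_zero_comm (hv _ hm)

theorem perp_sup (M N : Submodule K E) : h.perp (M ⊔ N) = h.perp M ⊓ h.perp N := by
  refine le_antisymm (le_inf (h.perp_antitone le_sup_left) (h.perp_antitone le_sup_right)) ?_
  rintro v ⟨hvM, hvN⟩ _ hm
  obtain ⟨a, ha, b, hb, rfl⟩ := Submodule.mem_sup.1 hm
  rw [h.form_add_right, hvM a ha, hvN b hb, add_zero]

theorem mem_perp_span_singleton {v x : E} : v ∈ h.perp (K ∙ x) ↔ h.form v x = 0 := by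
  refine ⟨fun hv => hv x (Submodule.mem_span_singleton_self x), fun hvx m hm => ?_⟩
  obtain ⟨c, rfl⟩ := Submodule.mem_span_singleton.1 hm
  rw [h.form_smul_right, hvx, zero_mul]

theorem perp_bot : h.perp (⊥ : Submodule K E) = ⊤ :=
  eq_top_iff.2 fun v _ m hm => by rw [(Submodule.mem_bot K).1 hm, h.form_zero_right]

theorem perp_top : h.perp (⊤ : Submodule K E) = ⊥ :=
  eq_bot_iff.2 fun v hv => (Submodule.mem_bot K).2 (h.nondeg v fun x => hv x trivial)

def IsOrthoClosed (M : Submodule K E) : Prop :=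
  h.perp (h.perp M) = M

theorem isOrthoClosed_bot : h.IsOrthoClosed ⊥ := by
  rw [IsOrthoClosed, perp_bot, perp_top]

theorem perp_sup_span_singleton_sup_span_singleton {M : Submodule K E} {x z : E}
    (hz : z ∈ h.perp M) (hzx : h.form z x ≠ 0) :
    h.perp (M ⊔ K ∙ x) ⊔ K ∙ z = h.perp M := by
  refine le_antisymm (sup_le (h.perp_antitone le_sup_left)
    ((Submodule.span_singleton_le_iff_mem z _).2 hz)) fun w hw => ?_
  set σ := h.form w x * (h.form z x)⁻¹
  have hwσz : w - σ • z ∈ h.perp (M ⊔ K ∙ x) := by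
    rw [perp_sup]
    refine ⟨sub_mem hw (Submodule.smul_mem _ σ hz), h.mem_perp_span_singleton.2 ?_⟩
    rw [h.form_sub_left, h.form_smul_left, mul_assoc, inv_mul_cancel₀ hzx, mul_one, sub_self]
  rw [← sub_add_cancel w (σ • z)]
  exact Submodule.add_mem_sup hwσz (Submodule.smul_mem _ σ (Submodule.mem_span_singleton_self z))

variable {h} in
theorem IsOrthoClosed.sup_span_singleton {M : Submodule K E} (hM : h.IsOrthoClosed M) (x : E) :
    h.IsOrthoClosed (M ⊔ K ∙ x) := by
  by_cases hxM : x ∈ M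
  · rwa [sup_eq_left.2 ((Submodule.span_singleton_le_iff_mem x M).2 hxM)]
  obtain ⟨z, hz, hzx⟩ : ∃ z ∈ h.perp M, h.form z x ≠ 0 := by
    by_contra! H
    exact hxM (hM ▸ fun z hz => h.form_eq_zero_comm (H z hz))
  have hxz : h.form x z ≠ 0 := fun H => hzx (h.form_eq_zero_comm H)
  refine le_antisymm (fun y hy => ?_) (h.le_perp_perp _)
  set ρ := h.form y z * (h.form x z)⁻¹
  have hρx : ρ • x ∈ h.perp (h.perp (M ⊔ K ∙ x)) :=
    h.le_perp_perp _ (Submodule.mem_sup_right (Submodule.smul_mem _ ρ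
      (Submodule.mem_span_singleton_self x)))
  have hρz : h.form (y - ρ • x) z = 0 := by
    rw [h.form_sub_left, h.form_smul_left, mul_assoc, inv_mul_cancel₀ hxz, mul_one, sub_self]
  have hyρx : y - ρ • x ∈ M := by
    rw [← hM, ← h.perp_sup_span_singleton_sup_span_singleton hz hzx, perp_sup]
    exact ⟨sub_mem hy hρx, h.mem_perp_span_singleton.2 hρz⟩
  rw [← sub_add_cancel y (ρ • x)]
  exact Submodule.add_mem_sup hyρx (Submodule.smul_mem _ ρ (Submodule.mem_span_singleton_self x))

variable {h} in
theorem IsOrthoClosed.sup_of_fg {M N : Submodule K E} (hM : h.IsOrthoClosed M) (hN : N.FG) :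
    h.IsOrthoClosed (M ⊔ N) := by
  induction N, hN using Submodule.fg_induction generalizing M with
  | singleton x => exact hM.sup_span_singleton x
  | sup N₁ N₂ _ _ ih₁ ih₂ => rw [← sup_assoc]; exact ih₂ (ih₁ hM)

theorem isOrthoClosed_of_fg {N : Submodule K E} (hN : N.FG) : h.IsOrthoClosed N := by
  simpa using h.isOrthoClosed_bot.sup_of_fg hN

end HermitianSpace

/-- If `M` is closed and `N` is finite-dimensional then `M + N` is closed;
in particular every finite-dimensional subspace is closed. -/
theorem closed_sup_finiteDimensional {K E : Type*} [DivisionRing K] [AddCommGroup E] [Module K E]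
    (h : HermitianSpace K E) (M N : Submodule K E)
    (hM : h.perp (h.perp M) = M) (hN : FiniteDimensional K N) :
    h.perp (h.perp (M ⊔ N)) = M ⊔ N ∧
      ∀ P : Submodule K E, FiniteDimensional K P → h.perp (h.perp P) = P :=
  ⟨HermitianSpace.IsOrthoClosed.sup_of_fg (h := h) hM (Module.Finite.iff_fg.1 hN),
    fun _ hP => h.isOrthoClosed_of_fg (Module.Finite.iff_fg.1 hP)⟩
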